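/- The estimator V₃ = N⁻¹ ∑_{n=1}^N f(Xₙ) f(X'ₙ) − μ̂ μ̂' satisfies E[V₃] = σ_Y² − σ_Y²/N = (1 − 1/N) σ_Y². -/

import Mathlib

/-!
Write `U = f ∘ X` and `U' = f ∘ X'`. For bounded `f`, conditional independence and equality of
the conditional laws give `E[U U'] = E[E[U | 𝓖]²]`. Both sides are continuous for the L²
topology (conditional expectation is an L² contraction), so truncating `f` extends the identity
to square-integrable `f`. Since `X` and `X'` also have the same law, `Cov(U, U') = Var(E[U | 𝓖])`.
For independent copies of the pair `(U, U')`, the empirical cross-covariance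
`N⁻¹ ∑ Uₙ U'ₙ - Ū Ū'` has mean `(1 - 1/N) Cov(U, U')`, because `Cov(Ū, Ū') = Cov(U, U') / N`.
-/

open MeasureTheory ProbabilityTheory Filter Topology
open scoped ENNReal

section LTwo

variable {Ω : Type*} {m m₀ : MeasurableSpace Ω} {μ : Measure Ω}

theorem unifIntegrable_of_dominated {ι β : Type*} [NormedAddCommGroup β] {p : ℝ≥0∞}
    {u : ι → Ω → β} {g : Ω → β} (hp : 1 ≤ p) (hp' : p ≠ ∞) (hg : MemLp g p μ)
    (hug : ∀ i, ∀ᵐ ω ∂μ, ‖u i ω‖ ≤ ‖g ω‖) : UnifIntegrable u p μ := by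
  intro ε hε
  obtain ⟨δ, hδ, hgδ⟩ := hg.eLpNorm_indicator_le hp hp' hε
  refine ⟨δ, hδ, fun i s hs hμs => (eLpNorm_mono_ae ?_).trans (hgδ s hs hμs)⟩
  filter_upwards [hug i] with ω hω
  by_cases h : ω ∈ s <;> simp [h, hω]

theorem tendsto_eLpNorm_truncation_sub [IsFiniteMeasure μ] {p : ℝ≥0∞} (hp : 1 ≤ p) (hp' : p ≠ ∞)
    {u : Ω → ℝ} (hu : MemLp u p μ) :
    Tendsto (fun n : ℕ => eLpNorm (truncation u n - u) p μ) atTop (𝓝 0) := by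
  refine tendsto_Lp_finite_of_tendsto_ae hp hp' (fun n => hu.1.truncation) hu
    (unifIntegrable_of_dominated hp hp' hu fun n => ae_of_all _ fun ω => ?_)
    (ae_of_all _ fun ω => ?_)
  · simpa only [Real.norm_eq_abs] using abs_truncation_le_abs_self u n ω
  · refine tendsto_const_nhds.congr' ?_
    filter_upwards [tendsto_natCast_atTop_atTop.eventually_gt_atTop |u ω|] with n hn
    exact (truncation_eq_self hn).symm

theorem MeasureTheory.MemLp.inner_toLp_toLp {u v : Ω → ℝ} (hu : MemLp u 2 μ) (hv : MemLp v 2 μ) :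
    inner ℝ (hu.toLp u) (hv.toLp v) = ∫ ω, u ω * v ω ∂μ := by
  rw [L2.inner_def]
  refine integral_congr_ae ?_
  filter_upwards [hu.coeFn_toLp, hv.coeFn_toLp] with ω hu hv
  simp [hu, hv, mul_comm]

theorem tendsto_integral_mul_of_tendsto_eLpNorm {ι : Type*} {l : Filter ι}
    {u v : ι → Ω → ℝ} {u₀ v₀ : Ω → ℝ} (hu : ∀ i, MemLp (u i) 2 μ) (hv : ∀ i, MemLp (v i) 2 μ)
    (hu₀ : MemLp u₀ 2 μ) (hv₀ : MemLp v₀ 2 μ)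
    (hlimu : Tendsto (fun i => eLpNorm (u i - u₀) 2 μ) l (𝓝 0))
    (hlimv : Tendsto (fun i => eLpNorm (v i - v₀) 2 μ) l (𝓝 0)) :
    Tendsto (fun i => ∫ ω, u i ω * v i ω ∂μ) l (𝓝 (∫ ω, u₀ ω * v₀ ω ∂μ)) := by
  have h := ((Lp.tendsto_Lp_iff_tendsto_eLpNorm'' u hu u₀ hu₀).2 hlimu).inner (𝕜 := ℝ)
    ((Lp.tendsto_Lp_iff_tendsto_eLpNorm'' v hv v₀ hv₀).2 hlimv)
  simpa only [MemLp.inner_toLp_toLp] using h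

theorem tendsto_eLpNorm_condExp_sub {ι : Type*} {l : Filter ι} {p : ℝ≥0∞} (hp : 1 ≤ p)
    {u : ι → Ω → ℝ} {u₀ : Ω → ℝ} (hu : ∀ i, Integrable (u i) μ) (hu₀ : Integrable u₀ μ)
    (hlim : Tendsto (fun i => eLpNorm (u i - u₀) p μ) l (𝓝 0)) :
    Tendsto (fun i => eLpNorm (μ[u i|m] - μ[u₀|m]) p μ) l (𝓝 0) := by
  refine tendsto_of_tendsto_of_tendsto_of_le_of_le tendsto_const_nhds hlim (fun _ => zero_le)
    fun i => ?_
  rw [← eLpNorm_congr_ae (condExp_sub (hu i) hu₀ m)]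
  exact eLpNorm_condExp_le_eLpNorm _ hp

end LTwo

section CondIndep

variable {Ω F : Type*} [MeasurableSpace F]

def CondIndepFunBdd (m : MeasurableSpace Ω) {m₀ : MeasurableSpace Ω} (P : Measure Ω)
    (X X' : Ω → F) : Prop :=
  ∀ g h : F → ℝ, Measurable g → Measurable h → (∃ C, ∀ x, |g x| ≤ C) → (∃ C, ∀ x, |h x| ≤ C) →
    P[(fun ω => g (X ω) * h (X' ω))|m]
      =ᵐ[P] fun ω => ((P[(fun ω' => g (X ω'))|m]) ω) * ((P[(fun ω' => h (X' ω'))|m]) ω)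

def CondIdentDistribBdd (m : MeasurableSpace Ω) {m₀ : MeasurableSpace Ω} (P : Measure Ω)
    (X X' : Ω → F) : Prop :=
  ∀ g : F → ℝ, Measurable g → (∃ C, ∀ x, |g x| ≤ C) →
    P[(fun ω => g (X ω))|m] =ᵐ[P] P[(fun ω => g (X' ω))|m]

variable {m m₀ : MeasurableSpace Ω} {P : Measure Ω}

theorem CondIdentDistribBdd.identDistrib [IsFiniteMeasure P] (hm : m ≤ m₀) {X X' : Ω → F}
    (hX : Measurable X) (hX' : Measurable X') (h : CondIdentDistribBdd m P X X') :
    IdentDistrib X X' P P := by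
  refine ⟨hX.aemeasurable, hX'.aemeasurable, Measure.ext fun s hs => ?_⟩
  have hind : Measurable (s.indicator (1 : F → ℝ)) := measurable_one.indicator hs
  have hbdd : ∃ C, ∀ x, |s.indicator (1 : F → ℝ) x| ≤ C :=
    ⟨1, fun x => by by_cases hx : x ∈ s <;> simp [hx]⟩
  have hint := integral_congr_ae (h _ hind hbdd)
  rw [integral_condExp hm, integral_condExp hm] at hint
  simp only [← Set.indicator_comp_right, Pi.one_comp] at hint
  rw [integral_indicator_one (hX hs), integral_indicator_one (hX' hs)] at hint
  rw [Measure.map_apply hX hs, Measure.map_apply hX' hs]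
  exact (measureReal_eq_measureReal_iff (measure_ne_top _ _) (measure_ne_top _ _)).1 hint

theorem CondIndepFunBdd.integral_comp_mul_comp_eq_integral_condExp_sq_of_bdd [IsFiniteMeasure P]
    (hm : m ≤ m₀) {X X' : Ω → F} (hindep : CondIndepFunBdd m P X X') (hident : CondIdentDistribBdd m P X X')
    {g : F → ℝ} (hg : Measurable g) (hbdd : ∃ C, ∀ x, |g x| ≤ C) :
    ∫ ω, g (X ω) * g (X' ω) ∂P = ∫ ω, (P[(fun ω' => g (X ω'))|m] ω) ^ 2 ∂P := by
  rw [← integral_condExp hm]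
  refine integral_congr_ae ?_
  filter_upwards [hindep g g hg hg hbdd hbdd, hident g hg hbdd] with ω hprod hsame
  rw [hprod, ← hsame, sq]

theorem CondIndepFunBdd.integral_comp_mul_comp_eq_integral_condExp_sq [IsFiniteMeasure P]
    (hm : m ≤ m₀) {X X' : Ω → F} (hindep : CondIndepFunBdd m P X X')
    (hident : CondIdentDistribBdd m P X X') {f : F → ℝ} (hf : Measurable f)
    (hfX : MemLp (fun ω => f (X ω)) 2 P) (hfX' : MemLp (fun ω => f (X' ω)) 2 P) :
    ∫ ω, f (X ω) * f (X' ω) ∂P = ∫ ω, (P[(fun ω' => f (X ω'))|m] ω) ^ 2 ∂P := by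
  have htrunc_meas (n : ℕ) : Measurable (truncation f n) :=
    (measurable_id.indicator measurableSet_Ioc).comp hf
  have htrunc_bdd (n : ℕ) : ∃ C, ∀ x, |truncation f n x| ≤ C :=
    ⟨|(n : ℝ)|, abs_truncation_le_bound f n⟩
  have hmemX (n : ℕ) : MemLp (truncation (fun ω => f (X ω)) n) 2 P :=
    hfX.1.memLp_truncation
  have hmemX' (n : ℕ) : MemLp (truncation (fun ω => f (X' ω)) n) 2 P :=
    hfX'.1.memLp_truncation
  have hlimX := tendsto_eLpNorm_truncation_sub one_le_two ENNReal.ofNat_ne_top hfX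
  have hlimX' := tendsto_eLpNorm_truncation_sub one_le_two ENNReal.ofNat_ne_top hfX'
  have hlimLHS := tendsto_integral_mul_of_tendsto_eLpNorm hmemX hmemX' hfX hfX' hlimX hlimX'
  have hlimcond := tendsto_eLpNorm_condExp_sub (m := m) one_le_two
    (fun n => (hmemX n).integrable one_le_two) (hfX.integrable one_le_two) hlimX
  have hlimRHS := tendsto_integral_mul_of_tendsto_eLpNorm
    (fun n => (hmemX n).condExp one_le_two) (fun n => (hmemX n).condExp one_le_two)
    (hfX.condExp one_le_two) (hfX.condExp one_le_two) hlimcond hlimcond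
  simp only [← sq] at hlimRHS
  refine tendsto_nhds_unique hlimLHS (hlimRHS.congr fun n => ?_)
  exact (hindep.integral_comp_mul_comp_eq_integral_condExp_sq_of_bdd hm hident (htrunc_meas n)
    (htrunc_bdd n)).symm

theorem CondIndepFunBdd.covariance_comp_eq_variance_condExp [IsProbabilityMeasure P]
    (hm : m ≤ m₀) {X X' : Ω → F} (hX : Measurable X) (hX' : Measurable X')
    (hindep : CondIndepFunBdd m P X X') (hident : CondIdentDistribBdd m P X X') {f : F → ℝ}
    (hf : Measurable f) (hfX : MemLp (fun ω => f (X ω)) 2 P)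
    (hfX' : MemLp (fun ω => f (X' ω)) 2 P) :
    cov[fun ω => f (X ω), fun ω => f (X' ω); P] = Var[P[(fun ω => f (X ω))|m]; P] := by
  have hmean : ∫ ω, f (X' ω) ∂P = ∫ ω, f (X ω) ∂P :=
    ((hident.identDistrib hm hX hX').comp hf).integral_eq.symm
  rw [covariance_eq_sub hfX hfX', variance_eq_sub (hfX.condExp one_le_two), integral_condExp hm,
    hmean]
  simp only [Pi.mul_apply, Pi.pow_apply]
  rw [hindep.integral_comp_mul_comp_eq_integral_condExp_sq hm hident hf hfX hfX', sq]

end CondIndep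

section Sample

variable {Ω : Type*} {mΩ : MeasurableSpace Ω} {μ : Measure Ω}

theorem ProbabilityTheory.IdentDistrib.covariance_comp_eq {α Ω' : Type*} [MeasurableSpace α]
    {mΩ' : MeasurableSpace Ω'} {μ' : Measure Ω'} {Z : Ω → α} {Z' : Ω' → α}
    (h : IdentDistrib Z Z' μ μ') {φ ψ : α → ℝ} (hφ : Measurable φ) (hψ : Measurable ψ) :
    cov[φ ∘ Z, ψ ∘ Z; μ] = cov[φ ∘ Z', ψ ∘ Z'; μ'] := by
  rw [← covariance_map hφ.aestronglyMeasurable hψ.aestronglyMeasurable h.aemeasurable_fst,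
    h.map_eq, covariance_map hφ.aestronglyMeasurable hψ.aestronglyMeasurable h.aemeasurable_snd]

variable {ι : Type*} [Fintype ι] [Nonempty ι]

theorem integral_inv_card_mul_sum_of_integral_eq {U : ι → Ω → ℝ} (hU : ∀ i, Integrable (U i) μ)
    {a : ℝ} (hUa : ∀ i, μ[U i] = a) :
    ∫ ω, (Fintype.card ι : ℝ)⁻¹ * ∑ i, U i ω ∂μ = a := by
  rw [integral_const_mul, integral_finsetSum _ fun i _ => hU i]
  simp only [hUa, Finset.sum_const, Finset.card_univ, nsmul_eq_mul]
  field_simp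

theorem integral_empirical_cross_covariance [IsProbabilityMeasure μ] {U V : ι → Ω → ℝ}
    (hU : ∀ i, MemLp (U i) 2 μ) (hV : ∀ i, MemLp (V i) 2 μ) (hindep : ∀ i j, i ≠ j → IndepFun (U i) (V j) μ) {a b c : ℝ}
    (hUa : ∀ i, μ[U i] = a) (hVb : ∀ i, μ[V i] = b) (hc : ∀ i, cov[U i, V i; μ] = c) :
    ∫ ω, ((Fintype.card ι : ℝ)⁻¹ * ∑ i, U i ω * V i ω
        - ((Fintype.card ι : ℝ)⁻¹ * ∑ i, U i ω) * ((Fintype.card ι : ℝ)⁻¹ * ∑ i, V i ω)) ∂μ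
      = (1 - 1 / (Fintype.card ι : ℝ)) * c := by
  set n : ℝ := (Fintype.card ι : ℝ) with hn_def
  have hn : n ≠ 0 := Nat.cast_ne_zero.2 Fintype.card_ne_zero
  have hUbar : MemLp (fun ω => n⁻¹ * ∑ i, U i ω) 2 μ :=
    (memLp_finsetSum _ fun i _ => hU i).const_mul _
  have hVbar : MemLp (fun ω => n⁻¹ * ∑ i, V i ω) 2 μ :=
    (memLp_finsetSum _ fun i _ => hV i).const_mul _
  have hdiag (i : ι) : ∫ ω, U i ω * V i ω ∂μ = c + a * b := by
    rw [← hc i, covariance_eq_sub (hU i) (hV i), hUa, hVb]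
    simp
  have hcov_bar : cov[fun ω => n⁻¹ * ∑ i, U i ω, fun ω => n⁻¹ * ∑ i, V i ω; μ] = n⁻¹ * c := by
    rw [covariance_const_mul_left, covariance_const_mul_right, covariance_fun_sum_fun_sum hU hV]
    have hrow (i : ι) : ∑ j, cov[U i, V j; μ] = c := by
      rw [Finset.sum_eq_single i
        (fun j _ hji => (hindep i j hji.symm).covariance_eq_zero (hU i) (hV j)) (by simp), hc]
    simp only [hrow, Finset.sum_const, Finset.card_univ, nsmul_eq_mul, ← hn_def]
    field_simp
  have hprod : ∫ ω, (n⁻¹ * ∑ i, U i ω) * (n⁻¹ * ∑ i, V i ω) ∂μ = n⁻¹ * c + a * b := by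
    have h := covariance_eq_sub hUbar hVbar
    rw [hcov_bar,
      integral_inv_card_mul_sum_of_integral_eq (fun i => (hU i).integrable one_le_two) hUa,
      integral_inv_card_mul_sum_of_integral_eq (fun i => (hV i).integrable one_le_two) hVb] at h
    simp only [Pi.mul_apply] at h
    linarith
  have hint_diag : Integrable (fun ω => n⁻¹ * ∑ i, U i ω * V i ω) μ :=
    (integrable_finsetSum _ fun i _ => (hU i).integrable_mul (hV i)).const_mul _
  have hint_prod : Integrable (fun ω => (n⁻¹ * ∑ i, U i ω) * (n⁻¹ * ∑ i, V i ω)) μ :=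
    hUbar.integrable_mul hVbar
  rw [integral_sub hint_diag hint_prod, hprod,
    integral_inv_card_mul_sum_of_integral_eq (U := fun i ω => U i ω * V i ω)
      (fun i => (hU i).integrable_mul (hV i)) hdiag]
  field_simp
  ring

end Sample

theorem estimator_V3_bias_general
    {Ω E F : Type*} (𝓖 : MeasurableSpace Ω)
    [MeasurableSpace Ω] [MeasurableSpace E] [MeasurableSpace F]
    (P : Measure Ω) [IsProbabilityMeasure P]
    (Y : Ω → E) (X X' : Ω → F) (f : F → ℝ)
    (hY : Measurable Y) (hX : Measurable X) (hX' : Measurable X') (hf : Measurable f)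
    (hL2 : MemLp (fun ω => f (X ω)) 2 P) (hL2' : MemLp (fun ω => f (X' ω)) 2 P)
    (h𝓖 : 𝓖 = MeasurableSpace.comap Y inferInstance)
    -- conditional independence of `X` and `X'` given `𝓖 = σ(Y)`
    (hCondIndep : ∀ g h : F → ℝ, Measurable g → Measurable h →
      (∃ C, ∀ x, |g x| ≤ C) → (∃ C, ∀ x, |h x| ≤ C) →
      P[(fun ω => g (X ω) * h (X' ω))|𝓖]
        =ᵐ[P] fun ω => ((P[(fun ω' => g (X ω'))|𝓖]) ω) * ((P[(fun ω' => h (X' ω'))|𝓖]) ω))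
    -- `X` and `X'` have the same conditional distribution given `𝓖`
    (hSameCondDist : ∀ g : F → ℝ, Measurable g → (∃ C, ∀ x, |g x| ≤ C) →
      P[(fun ω => g (X ω))|𝓖] =ᵐ[P] P[(fun ω => g (X' ω))|𝓖])
    (σY2 : ℝ)
    (hσY2 : σY2 = variance (P[(fun ω => f (X ω))|𝓖]) P)
    (N : ℕ) (hN : 0 < N)
    -- i.i.d. sample triples `(Yₙ, Xₙ, X'ₙ)` with the same joint distribution as `(Y, X, X')`
    (Ys : Fin N → Ω → E) (Xs Xs' : Fin N → Ω → F)
    (hYs : ∀ n, Measurable (Ys n)) (hXs : ∀ n, Measurable (Xs n)) (hXs' : ∀ n, Measurable (Xs' n))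
    (hIndep : iIndepFun (fun n ω => (Ys n ω, Xs n ω, Xs' n ω)) P)
    (hIdent : ∀ n, Measure.map (fun ω => (Ys n ω, Xs n ω, Xs' n ω)) P
        = Measure.map (fun ω => (Y ω, X ω, X' ω)) P)
    (muHat muHat' : Ω → ℝ)
    (hmuHat : ∀ ω, muHat ω = (N : ℝ)⁻¹ * ∑ n, f (Xs n ω))
    (hmuHat' : ∀ ω, muHat' ω = (N : ℝ)⁻¹ * ∑ n, f (Xs' n ω))
    :
    ∫ ω, ((N : ℝ)⁻¹ * ∑ n, f (Xs n ω) * f (Xs' n ω) - muHat ω * muHat' ω) ∂P = σY2 - σY2 / (N : ℝ) ∧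
    ∫ ω, ((N : ℝ)⁻¹ * ∑ n, f (Xs n ω) * f (Xs' n ω) - muHat ω * muHat' ω) ∂P = (1 - 1 / (N : ℝ)) * σY2 := by
  have hm : 𝓖 ≤ ‹MeasurableSpace Ω› := h𝓖 ▸ hY.comap_le
  have hsample (n : Fin N) :
      IdentDistrib (fun ω => (Ys n ω, Xs n ω, Xs' n ω)) (fun ω => (Y ω, X ω, X' ω)) P P :=
    ⟨((hYs n).prodMk ((hXs n).prodMk (hXs' n))).aemeasurable,
      (hY.prodMk (hX.prodMk hX')).aemeasurable, hIdent n⟩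
  have hφ : Measurable fun p : E × F × F => f p.2.1 := hf.comp measurable_snd.fst
  have hψ : Measurable fun p : E × F × F => f p.2.2 := hf.comp measurable_snd.snd
  have hcov : cov[fun ω => f (X ω), fun ω => f (X' ω); P] = σY2 :=
    hσY2 ▸ CondIndepFunBdd.covariance_comp_eq_variance_condExp hm hX hX' hCondIndep hSameCondDist
      hf hL2 hL2'
  have : Nonempty (Fin N) := ⟨⟨0, hN⟩⟩
  have hV3 := integral_empirical_cross_covariance (μ := P)
    (U := fun n ω => f (Xs n ω)) (V := fun n ω => f (Xs' n ω))
    (fun n => ((hsample n).comp hφ).memLp_iff.2 hL2)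
    (fun n => ((hsample n).comp hψ).memLp_iff.2 hL2')
    (fun n m hnm => (hIndep.indepFun hnm).comp hφ hψ)
    (fun n => ((hsample n).comp hφ).integral_eq) (fun n => ((hsample n).comp hψ).integral_eq)
    (fun n => ((hsample n).covariance_comp_eq hφ hψ).trans hcov)
  simp only [Fintype.card_fin] at hV3
  simp only [hmuHat, hmuHat']
  exact ⟨by rw [hV3]; ring, hV3⟩

/-- `E[V₃] = σ_Y² - σ_Y²/N = (1 - 1/N) σ_Y²` where `V₃ = N⁻¹ ∑ₙ f(Xₙ) f(X'ₙ) - μ̂ μ̂'`. -/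
theorem estimator_V3_bias
    {Ω E F : Type*} (𝓖 : MeasurableSpace Ω)
    [MeasurableSpace Ω] [MeasurableSpace E] [MeasurableSpace F]
    (P : Measure Ω) [IsProbabilityMeasure P]
    (Y : Ω → E) (X X' : Ω → F) (f : F → ℝ)
    (hY : Measurable Y) (hX : Measurable X) (hX' : Measurable X') (hf : Measurable f)
    (hL2 : MemLp (fun ω => f (X ω)) 2 P) (hL2' : MemLp (fun ω => f (X' ω)) 2 P)
    (h𝓖 : 𝓖 = MeasurableSpace.comap Y inferInstance)
    -- conditional independence of `X` and `X'` given `𝓖 = σ(Y)`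
    (hCondIndep : ∀ g h : F → ℝ, Measurable g → Measurable h →
      (∃ C, ∀ x, |g x| ≤ C) → (∃ C, ∀ x, |h x| ≤ C) →
      P[(fun ω => g (X ω) * h (X' ω))|𝓖]
        =ᵐ[P] fun ω => ((P[(fun ω' => g (X ω'))|𝓖]) ω) * ((P[(fun ω' => h (X' ω'))|𝓖]) ω))
    -- `X` and `X'` have the same conditional distribution given `𝓖`
    (hSameCondDist : ∀ g : F → ℝ, Measurable g → (∃ C, ∀ x, |g x| ≤ C) →
      P[(fun ω => g (X ω))|𝓖] =ᵐ[P] P[(fun ω => g (X' ω))|𝓖])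
    (μ σ2 σY2 : ℝ) (hμ : μ = ∫ ω, f (X ω) ∂P)
    (hσ2 : σ2 = variance (fun ω => f (X ω)) P)
    (hσY2 : σY2 = variance (P[(fun ω => f (X ω))|𝓖]) P)
    (N : ℕ) (hN : 0 < N)
    -- i.i.d. sample triples `(Yₙ, Xₙ, X'ₙ)` with the same joint distribution as `(Y, X, X')`
    (Ys : Fin N → Ω → E) (Xs Xs' : Fin N → Ω → F)
    (hYs : ∀ n, Measurable (Ys n)) (hXs : ∀ n, Measurable (Xs n)) (hXs' : ∀ n, Measurable (Xs' n))
    (hIndep : iIndepFun (fun n ω => (Ys n ω, Xs n ω, Xs' n ω)) P)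
    (hIdent : ∀ n, Measure.map (fun ω => (Ys n ω, Xs n ω, Xs' n ω)) P
        = Measure.map (fun ω => (Y ω, X ω, X' ω)) P)
    (muHat muHat' : Ω → ℝ)
    (hmuHat : ∀ ω, muHat ω = (N : ℝ)⁻¹ * ∑ n, f (Xs n ω))
    (hmuHat' : ∀ ω, muHat' ω = (N : ℝ)⁻¹ * ∑ n, f (Xs' n ω))
    :
    ∫ ω, ((N : ℝ)⁻¹ * ∑ n, f (Xs n ω) * f (Xs' n ω) - muHat ω * muHat' ω) ∂P = σY2 - σY2 / (N : ℝ) ∧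
    ∫ ω, ((N : ℝ)⁻¹ * ∑ n, f (Xs n ω) * f (Xs' n ω) - muHat ω * muHat' ω) ∂P = (1 - 1 / (N : ℝ)) * σY2 :=
  estimator_V3_bias_general 𝓖 P Y X X' f hY hX hX' hf hL2 hL2' h𝓖 hCondIndep hSameCondDist σY2 hσY2
    N hN Ys Xs Xs' hYs hXs hXs' hIndep hIdent muHat muHat' hmuHat hmuHat'
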